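/- Stochastic gradient contraction: let f be L-smooth and μ-strongly convex, let g be a random vector with E[g] = ∇f(x_t) and E[‖g - ∇f(x⋆)‖²] ≤ 2A·D_f(x_t, x⋆) + C for constants A ≥ L, C ≥ 0. If 0 < γ ≤ 1/A, then E[‖x_t - γg - (x⋆ - γ∇f(x⋆))‖²] ≤ (1 - γμ)‖x_t - x⋆‖² + γ²C. -/

import Mathlib

open RealInnerProductSpace MeasureTheory
noncomputable section
abbrev Euc (d : ℕ) := EuclideanSpace ℝ (Fin d)

/-- Bregman divergence of a differentiable function with gradient `f'`. -/
def bregman {d : ℕ} (f : Euc d → ℝ) (f' : Euc d → Euc d) (x y : Euc d) : ℝ :=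
  f x - f y - ⟪f' y, x - y⟫

lemma convex_grad_ineq {d : ℕ} {h : Euc d → ℝ} {h' : Euc d → Euc d}
    (hc : ConvexOn ℝ Set.univ h) (hg : ∀ x, HasGradientAt h (h' x) x) (x y : Euc d) :
    h y + ⟪h' y, x - y⟫ ≤ h x := by
  set c : ℝ → Euc d := fun t => t • (x - y) + y with hcdef
  have hφc : ConvexOn ℝ Set.univ (h ∘ c) := by
    have h1 := hc.comp_affineMap ((AffineMap.lineMap y x : ℝ →ᵃ[ℝ] Euc d))
    have h2 : ConvexOn ℝ Set.univ (h ∘ (AffineMap.lineMap y x : ℝ →ᵃ[ℝ] Euc d)) := by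
      simpa only [Set.preimage_univ] using h1
    have hfun : (h ∘ c) = h ∘ (AffineMap.lineMap y x : ℝ →ᵃ[ℝ] Euc d) := by
      funext t; simp [hcdef, AffineMap.lineMap_apply]
    rw [hfun]; exact h2
  have hline : HasDerivAt c (x - y) 0 := by
    simpa [hcdef] using ((hasDerivAt_id (0 : ℝ)).smul_const (x - y)).add_const y
  have hc0 : c 0 = y := by simp [hcdef]
  have hc1 : c 1 = x := by simp [hcdef]
  have hFD : HasFDerivAt h ((InnerProductSpace.toDual ℝ (Euc d)) (h' y)) y :=
    (hg y).hasFDerivAt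
  have hφ : HasDerivAt (h ∘ c) ⟪h' y, x - y⟫ 0 := by
    rw [show y = c 0 from hc0.symm] at hFD
    have h3 := hFD.comp_hasDerivAt (0 : ℝ) hline
    rw [hc0] at h3
    simpa [InnerProductSpace.toDual_apply_apply] using h3
  have hs := hφc.le_slope_of_hasDerivAt (Set.mem_univ (0:ℝ)) (Set.mem_univ 1) one_pos hφ
  have : slope (h ∘ c) 0 1 = h x - h y := by
    simp [slope, Function.comp, hc0, hc1]
  rw [this] at hs
  linarith

lemma hasGradientAt_strong {d : ℕ} (f : Euc d → ℝ) (f' : Euc d → Euc d) (μ : ℝ)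
    (hgrad : ∀ x, HasGradientAt f (f' x) x) (x : Euc d) :
    HasGradientAt (fun z => f z - μ / 2 * ‖z‖ ^ 2) (f' x - μ • x) x := by
  rw [hasGradientAt_iff_hasFDerivAt]
  have h1 : HasFDerivAt f ((InnerProductSpace.toDual ℝ (Euc d)) (f' x)) x :=
    (hgrad x).hasFDerivAt
  have h2 : HasFDerivAt (fun z : Euc d => ‖z‖ ^ 2)
      (2 • (innerSL ℝ x).comp (ContinuousLinearMap.id ℝ (Euc d))) x :=
    (hasFDerivAt_id x).norm_sq
  have h3 := h1.sub (h2.const_smul (μ / 2))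
  refine (show HasFDerivAt (fun z => f z - μ / 2 * ‖z‖ ^ 2) _ x from h3).congr_fderiv ?_
  ext v
  simp [inner_sub_left, real_inner_smul_left, InnerProductSpace.toDual_apply_apply,
    real_inner_comm x v]
  ring

lemma strong_bregman {d : ℕ} (f : Euc d → ℝ) (f' : Euc d → Euc d) (μ : ℝ)
    (hgrad : ∀ x, HasGradientAt f (f' x) x)
    (hsc : ConvexOn ℝ Set.univ fun x => f x - μ / 2 * ‖x‖ ^ 2) (x y : Euc d) :
    μ / 2 * ‖x - y‖ ^ 2 ≤ f x - f y - ⟪f' y, x - y⟫ := by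
  have := convex_grad_ineq hsc (hasGradientAt_strong f f' μ hgrad) x y
  have hin : ⟪f' y - μ • y, x - y⟫ = ⟪f' y, x - y⟫ - μ * ⟪y, x - y⟫ := by
    rw [inner_sub_left, real_inner_smul_left]
  have hnorm : ‖x - y‖ ^ 2 = ‖x‖ ^ 2 - 2 * ⟪x, y⟫ + ‖y‖ ^ 2 := norm_sub_sq_real x y
  have hyx : ⟪y, x - y⟫ = ⟪x, y⟫ - ‖y‖ ^ 2 := by
    rw [inner_sub_right, real_inner_self_eq_norm_sq, real_inner_comm]
  rw [hin, hyx] at this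
  rw [hnorm]; linarith

/-- Stochastic gradient contraction (Lemma 6 in the paper): under unbiasedness and
expected smoothness, the stochastic gradient step contracts up to the noise `γ²C`. -/
theorem stochastic_grad_step_contraction {d : ℕ}
    {Ω : Type*} [MeasurableSpace Ω] (P : Measure Ω) [IsProbabilityMeasure P]
    (f : Euc d → ℝ) (f' : Euc d → Euc d) (L μ A C γ : ℝ)
    (hL : 0 < L) (hμ : 0 < μ) (hA : L ≤ A) (hC : 0 ≤ C)
    (hgrad : ∀ x, HasGradientAt f (f' x) x)
    (hsmooth : ∀ x y, ‖f' x - f' y‖ ≤ L * ‖x - y‖)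
    (hsc : ConvexOn ℝ Set.univ fun x => f x - μ / 2 * ‖x‖ ^ 2)
    (hγ0 : 0 < γ) (hγA : γ ≤ 1 / A)
    (xt xstar : Euc d) (g : Ω → Euc d)
    (hgint : Integrable g P)
    (hsqint : Integrable (fun ω => ‖g ω - f' xstar‖ ^ 2) P)
    (hstep : Integrable (fun ω => ‖xt - γ • g ω - (xstar - γ • f' xstar)‖ ^ 2) P)
    (hunbiased : ∫ ω, g ω ∂P = f' xt)
    (hES : ∫ ω, ‖g ω - f' xstar‖ ^ 2 ∂P ≤ 2 * A * bregman f f' xt xstar + C) :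
    ∫ ω, ‖xt - γ • g ω - (xstar - γ • f' xstar)‖ ^ 2 ∂P
      ≤ (1 - γ * μ) * ‖xt - xstar‖ ^ 2 + γ ^ 2 * C := by
  have hApos : 0 < A := lt_of_lt_of_le hL hA
  have hγA' : γ * A ≤ 1 := by
    rw [le_div_iff₀ hApos] at hγA; exact hγA
  have hb : Integrable (fun ω => g ω - f' xstar) P := hgint.sub (integrable_const _)
  have hbin : Integrable (fun ω => ⟪xt - xstar, g ω - f' xstar⟫) P :=
    hb.const_inner _
  have hexp : ∀ ω, ‖xt - γ • g ω - (xstar - γ • f' xstar)‖ ^ 2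
      = ‖xt - xstar‖ ^ 2 - 2 * γ * ⟪xt - xstar, g ω - f' xstar⟫
        + γ ^ 2 * ‖g ω - f' xstar‖ ^ 2 := by
    intro ω
    have h0 : xt - γ • g ω - (xstar - γ • f' xstar)
        = (xt - xstar) - γ • (g ω - f' xstar) := by
      rw [smul_sub]; abel
    rw [h0, norm_sub_sq_real, real_inner_smul_right, norm_smul, Real.norm_eq_abs,
      mul_pow, sq_abs]
    ring
  have hbint : ∫ ω, (g ω - f' xstar) ∂P = f' xt - f' xstar := by
    rw [integral_sub hgint (integrable_const _), hunbiased, integral_const]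
    simp
  have hI : ∫ ω, ‖xt - γ • g ω - (xstar - γ • f' xstar)‖ ^ 2 ∂P
      = ‖xt - xstar‖ ^ 2 - 2 * γ * ⟪xt - xstar, f' xt - f' xstar⟫
        + γ ^ 2 * ∫ ω, ‖g ω - f' xstar‖ ^ 2 ∂P := by
    have i1 : Integrable (fun ω => ‖xt - xstar‖ ^ 2
        - 2 * γ * ⟪xt - xstar, g ω - f' xstar⟫) P :=
      (integrable_const _).sub (hbin.const_mul _)
    have i2 : Integrable (fun ω => γ ^ 2 * ‖g ω - f' xstar‖ ^ 2) P :=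
      hsqint.const_mul _
    simp_rw [hexp]
    rw [integral_add i1 i2,
      integral_sub (integrable_const _) (hbin.const_mul _),
      integral_const, integral_const_mul, integral_const_mul,
      integral_inner hb, hbint]
    simp
  have hid : ⟪xt - xstar, f' xt - f' xstar⟫
      = bregman f f' xt xstar + bregman f f' xstar xt := by
    have e1 : xstar - xt = -(xt - xstar) := by abel
    rw [bregman, bregman, e1, inner_neg_right, real_inner_comm, inner_sub_left]
    ring
  have hD2 : μ / 2 * ‖xt - xstar‖ ^ 2 ≤ bregman f f' xstar xt := by
    have := strong_bregman f f' μ hgrad hsc xstar xt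
    rw [bregman]
    rw [norm_sub_rev xstar xt] at this
    exact this
  have hD1 : 0 ≤ bregman f f' xt xstar := by
    have := strong_bregman f f' μ hgrad hsc xt xstar
    have h0 : 0 ≤ μ / 2 * ‖xt - xstar‖ ^ 2 := by positivity
    rw [bregman]; linarith
  have hS := mul_le_mul_of_nonneg_left hES (sq_nonneg γ)
  rw [hI, hid]
  have hint1 : 0 ≤ (1 - γ * A) * γ * bregman f f' xt xstar :=
    mul_nonneg (mul_nonneg (by linarith) hγ0.le) hD1
  have hint2 : 0 ≤ γ * (bregman f f' xstar xt - μ / 2 * ‖xt - xstar‖ ^ 2) :=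
    mul_nonneg hγ0.le (by linarith)
  nlinarith [hS, hint1, hint2]
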